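/- arXiv:2304.06366 — 3 statements merged into one kernel-verified Lean document; each statement's English description precedes it below -/
import Mathlib

section
/- Exact marginalization preserves the joint distribution of remaining variables: let ST be a clique tree (a tree of cliques with sepsets on edges) whose calibrated beliefs represent the distribution P_ST = (∏_{C ∈ ST} β(C)) / (∏_{S ∈ ST} μ(S)), and let v be a variable contained only in cliques of a subtree. If all cliques containing v are collapsed into one clique with belief equal to the marginal over D_v of the joint distribution of that subtree (Equation for β(C_c)), then the resulting structure represents Σ_{D_v} P_ST, the exact marginal of the original distribution over the remaining variables. -/
open Finset

/-! Every factor that does not involve `v` can be pulled out of the sum over `D v`; what stays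
inside is exactly the joint distribution of the subtree, i.e. the summand defining `βc`. -/

theorem Finset.prod_eq_prod_filter_mul_prod_filter_not_of_eqOn {κ M : Type*} [CommMonoid M]
    (s : Finset κ) (p : κ → Prop) [DecidablePred p] {f g : κ → M}
    (h : ∀ i ∈ s, ¬p i → f i = g i) :
    ∏ i ∈ s, f i = (∏ i ∈ s.filter p, f i) * ∏ i ∈ s.filter (fun i => ¬p i), g i := by
  rw [← prod_filter_mul_prod_filter_not s p]
  congr 1
  refine prod_congr rfl fun i hi => ?_
  rw [mem_filter] at hi
  exact h i hi.1 hi.2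

theorem Finset.prod_eq_prod_mul_prod_compl_of_eqOn {κ M : Type*} [Fintype κ] [DecidableEq κ]
    [CommMonoid M] (t : Finset κ) {f g : κ → M} (h : ∀ i ∉ t, f i = g i) :
    ∏ i, f i = (∏ i ∈ t, f i) * ∏ i ∈ tᶜ, g i := by
  rw [← prod_mul_prod_compl t]
  exact congrArg _ (prod_congr rfl fun i hi => h i (mem_compl.mp hi))

theorem Finset.sum_div_mul_div {κ K : Type*} [Semifield K] (s : Finset κ) (f g : κ → K)
    (a b : K) : (∑ i ∈ s, f i / g i) * a / b = ∑ i ∈ s, f i * a / (g i * b) := by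
  rw [mul_div_assoc, sum_mul]
  exact sum_congr rfl fun _ _ => div_mul_div_comm _ _ _ _

theorem exactMarg_preserves_distribution_general
    {V : Type*} [DecidableEq V] {D : V → Type*} [∀ u, Fintype (D u)]
    {ι : Type*} [Fintype ι] [DecidableEq ι]
    (root : ι) (parent : ι → ι)
    (β μ : ι → (∀ u, D u) → ℝ)
    (v : V) (T : Finset ι)
    -- beliefs of cliques outside the subtree `T` do not depend on `v`
    (hout : ∀ i ∉ T, ∀ x d, β i (Function.update x v d) = β i x)
    -- sepset beliefs of edges not internal to `T` do not depend on `v`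
    (hext : ∀ i ∈ Finset.univ.erase root, ¬(i ∈ T ∧ parent i ∈ T) →
        ∀ x d, μ i (Function.update x v d) = μ i x)
    -- represented distribution of the original clique tree
    (P : (∀ u, D u) → ℝ)
    (hP : ∀ x, P x = (∏ i, β i x) / (∏ i ∈ Finset.univ.erase root, μ i x))
    -- belief of the collapsed clique: marginal over `D v` of the subtree's joint
    (βc : (∀ u, D u) → ℝ)
    (hβc : ∀ x, βc x = ∑ d : D v,
        (∏ i ∈ T, β i (Function.update x v d)) /
          (∏ i ∈ (Finset.univ.erase root).filter (fun i => i ∈ T ∧ parent i ∈ T),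
              μ i (Function.update x v d))) :
    ∀ x, βc x * (∏ i ∈ Tᶜ, β i x) /
        (∏ i ∈ (Finset.univ.erase root).filter (fun i => ¬(i ∈ T ∧ parent i ∈ T)),
            μ i x)
      = ∑ d : D v, P (Function.update x v d) := by
  intro x
  have hβ (d : D v) := prod_eq_prod_mul_prod_compl_of_eqOn T fun i hi => hout i hi x d
  have hμ (d : D v) := prod_eq_prod_filter_mul_prod_filter_not_of_eqOn (univ.erase root)
    (fun i => i ∈ T ∧ parent i ∈ T) fun i hi hnot => hext i hi hnot x d
  simp only [hP, hβ, hμ, hβc, sum_div_mul_div]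

/-- exact marginalization preserves the joint distribution of the
remaining variables.

A clique tree is encoded in rooted form: cliques are indexed by `ι` with a
distinguished `root` and a `parent` map; for each non-root index `i`, the edge
`(i, parent i)` carries sepset belief `μ i`.  The represented distribution is
`P x = (∏ i, β i x) / (∏ i ≠ root, μ i x)`.

The variable `v` occurs only in the cliques of a subtree `T` (so beliefs of
cliques outside `T`, and sepset beliefs of edges not internal to `T`, do not
depend on the value of `v`).  Collapsing all cliques of `T` into one clique
whose belief is the marginal over `D v` of the joint distribution of the
subtree (`βc` below) yields a structure representing exactly `Σ_{D_v} P`. -/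
theorem exactMarg_preserves_distribution
    {V : Type*} [DecidableEq V] {D : V → Type*} [∀ u, Fintype (D u)]
    [∀ u, DecidableEq (D u)]
    {ι : Type*} [Fintype ι] [DecidableEq ι]
    (root : ι) (parent : ι → ι)
    (β μ : ι → (∀ u, D u) → ℝ)
    (v : V) (T : Finset ι)
    -- beliefs of cliques outside the subtree `T` do not depend on `v`
    (hout : ∀ i ∉ T, ∀ x d, β i (Function.update x v d) = β i x)
    -- sepset beliefs of edges not internal to `T` do not depend on `v`
    (hext : ∀ i ∈ Finset.univ.erase root, ¬(i ∈ T ∧ parent i ∈ T) →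
        ∀ x d, μ i (Function.update x v d) = μ i x)
    -- represented distribution of the original clique tree
    (P : (∀ u, D u) → ℝ)
    (hP : ∀ x, P x = (∏ i, β i x) / (∏ i ∈ Finset.univ.erase root, μ i x))
    -- belief of the collapsed clique: marginal over `D v` of the subtree's joint
    (βc : (∀ u, D u) → ℝ)
    (hβc : ∀ x, βc x = ∑ d : D v,
        (∏ i ∈ T, β i (Function.update x v d)) /
          (∏ i ∈ (Finset.univ.erase root).filter (fun i => i ∈ T ∧ parent i ∈ T),
              μ i (Function.update x v d))) :
    ∀ x, βc x * (∏ i ∈ Tᶜ, β i x) /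
        (∏ i ∈ (Finset.univ.erase root).filter (fun i => ¬(i ∈ T ∧ parent i ∈ T)),
            μ i x)
      = ∑ d : D v, P (Function.update x v d) :=
  exactMarg_preserves_distribution_general root parent β μ v T hout hext P hP βc hβc
end

section
/- In a calibrated clique tree over two adjacent cliques C_1, C_2 with sepset S, the represented distribution β(C_1)·β(C_2)/μ(S) marginalizes onto C_1 to give exactly β(C_1). -/
/-
Summing `β₁ β₂ / μ` over the variables of `C₂ \ C₁` leaves the factor `β₁ / μ` untouched, since
it only depends on `C₁`. What remains is the marginal of `β₂` onto `S`, which by calibration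
is `μ`, and it cancels against the denominator.
-/

/-- Override a full assignment `x` on the variables in the finite set `A`
by the partial assignment `g`. -/
noncomputable def override {V : Type*} [DecidableEq V] {D : V → Type*}
    (A : Finset V) (x : ∀ v, D v) (g : ∀ v : A, D v) : ∀ v, D v :=
  fun v => if h : v ∈ A then g ⟨v, h⟩ else x v

/-- Marginalize (sum) a function `f` of assignments over all assignments to the
variables in the finite set `A`; the result is a function of the remaining variables. -/
noncomputable def margOver {V : Type*} [DecidableEq V] {D : V → Type*}
    [∀ v, Fintype (D v)] (A : Finset V) (f : (∀ v, D v) → ℝ) (x : ∀ v, D v) : ℝ :=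
  ∑ g : ∀ v : A, D v, f (override A x g)

section Marginalization

variable {V : Type*} [DecidableEq V] {D : V → Type*}

theorem override_of_notMem {A : Finset V} {x : ∀ v, D v} {g : ∀ v : A, D v} {u : V}
    (hu : u ∉ A) : override A x g u = x u :=
  dif_neg hu

theorem DependsOn.apply_override {β : Type*} {f : (∀ v, D v) → β} {s : Set V}
    (hf : DependsOn f s) {A : Finset V} (hA : ∀ u ∈ s, u ∉ A) (x : ∀ v, D v)
    (g : ∀ v : A, D v) : f (override A x g) = f x :=
  hf fun u hu => override_of_notMem (hA u hu)

theorem margOver_mul_left_of_dependsOn [∀ v, Fintype (D v)] {f h : (∀ v, D v) → ℝ}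
    {s : Set V} (hf : DependsOn f s) {A : Finset V} (hA : ∀ u ∈ s, u ∉ A) (x : ∀ v, D v) :
    margOver A (fun y => f y * h y) x = f x * margOver A h x := by
  simp only [margOver, hf.apply_override hA, Finset.mul_sum]

end Marginalization

theorem two_clique_marginal_general {V : Type*} [DecidableEq V] {D : V → Type*}
    [∀ u, Fintype (D u)]
    (C₁ C₂ : Finset V)
    (β₁ β₂ μ : (∀ u, D u) → ℝ)
    -- beliefs depend only on the variables of their cliques / sepset
    (hdep₁ : ∀ x y, (∀ u ∈ C₁, x u = y u) → β₁ x = β₁ y)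
    (hdepμ : ∀ x y, (∀ u ∈ C₁ ∩ C₂, x u = y u) → μ x = μ y)
    -- nonnegativity of beliefs and positivity of the sepset belief
    (hμpos : ∀ x, 0 < μ x)
    -- calibration: both cliques marginalize onto the sepset to `μ`
    (hcal₂ : ∀ x, margOver (C₂ \ (C₁ ∩ C₂)) β₂ x = μ x)
    -- represented distribution
    (P : (∀ u, D u) → ℝ)
    (hP : ∀ x, P x = β₁ x * β₂ x / μ x) :
    ∀ x, margOver (C₂ \ C₁) P x = β₁ x := by
  intro x
  have hμ : DependsOn μ (C₁ : Set V) := fun y z h =>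
    hdepμ y z fun u hu => h u (Finset.mem_of_mem_inter_left hu)
  have hquot : DependsOn (fun y => β₁ y / μ y) (C₁ : Set V) := fun y z h => by
    simp only [hdep₁ y z h, hμ h]
  have hP' : P = fun y => β₁ y / μ y * β₂ y := funext fun y => by rw [hP]; ring
  have hcal : margOver (C₂ \ C₁) β₂ x = μ x := by
    rw [← Finset.sdiff_inter_self_right, hcal₂]
  have hdisj : ∀ u ∈ (C₁ : Set V), u ∉ C₂ \ C₁ := fun u hu h => (Finset.mem_sdiff.mp h).2 hu
  rw [hP', margOver_mul_left_of_dependsOn hquot hdisj x, hcal]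
  exact div_mul_cancel₀ _ (hμpos x).ne'

/-- in a calibrated clique tree with two adjacent cliques `C₁, C₂`
and sepset `S = C₁ ∩ C₂`, the represented distribution
`P = β₁ · β₂ / μ` marginalizes onto `C₁` to give exactly `β₁`. -/
theorem two_clique_marginal {V : Type*} [DecidableEq V] {D : V → Type*}
    [∀ u, Fintype (D u)]
    (C₁ C₂ : Finset V)
    (β₁ β₂ μ : (∀ u, D u) → ℝ)
    -- beliefs depend only on the variables of their cliques / sepset
    (hdep₁ : ∀ x y, (∀ u ∈ C₁, x u = y u) → β₁ x = β₁ y)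
    (hdep₂ : ∀ x y, (∀ u ∈ C₂, x u = y u) → β₂ x = β₂ y)
    (hdepμ : ∀ x y, (∀ u ∈ C₁ ∩ C₂, x u = y u) → μ x = μ y)
    -- nonnegativity of beliefs and positivity of the sepset belief
    (hβ₁ : ∀ x, 0 ≤ β₁ x) (hβ₂ : ∀ x, 0 ≤ β₂ x) (hμpos : ∀ x, 0 < μ x)
    -- calibration: both cliques marginalize onto the sepset to `μ`
    (hcal₁ : ∀ x, margOver (C₁ \ (C₁ ∩ C₂)) β₁ x = μ x)
    (hcal₂ : ∀ x, margOver (C₂ \ (C₁ ∩ C₂)) β₂ x = μ x)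
    -- represented distribution
    (P : (∀ u, D u) → ℝ)
    (hP : ∀ x, P x = β₁ x * β₂ x / μ x) :
    ∀ x, margOver (C₂ \ C₁) P x = β₁ x :=
  two_clique_marginal_general C₁ C₂ β₁ β₂ μ hdep₁ hdepμ hμpos hcal₂ P hP
end

section
/- Local marginalization preserves calibration along a whole path: if v appears in a connected path of cliques C_1—C_2—…—C_n of a calibrated clique tree with v in every sepset along the path, then marginalizing v out of every clique and sepset on the path yields beliefs that are still calibrated on every edge of the path. -/
section

variable {V : Type*} [DecidableEq V] {D : V → Type*}

theorem Finset.erase_sdiff_erase_of_mem {C S : Finset V} {v : V} (hv : v ∈ S) :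
    C.erase v \ S.erase v = C \ S := by
  grind

theorem override_comm {A B : Finset V} (hAB : Disjoint A B) (x : ∀ v, D v)
    (g : ∀ v : A, D v) (h : ∀ v : B, D v) :
    override B (override A x g) h = override A (override B x h) g := by
  funext u
  by_cases hA : u ∈ A
  · have hB : u ∉ B := Finset.disjoint_left.mp hAB hA
    simp [override, hA, hB]
  · by_cases hB : u ∈ B <;> simp [override, hA, hB]

variable [∀ v, Fintype (D v)]

theorem margOver_comm {A B : Finset V} (hAB : Disjoint A B) (f : (∀ v, D v) → ℝ) :
    margOver A (margOver B f) = margOver B (margOver A f) := by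
  funext x
  unfold margOver
  rw [Finset.sum_comm]
  exact Finset.sum_congr rfl fun h _ => Finset.sum_congr rfl fun g _ => by
    rw [override_comm hAB]

theorem margOver_margOver_of_margOver_eq {A B : Finset V} (hAB : Disjoint A B)
    {f g : (∀ v, D v) → ℝ} (hfg : margOver A f = g) :
    margOver A (margOver B f) = margOver B g := by
  rw [margOver_comm hAB, hfg]

theorem margOver_erase_sdiff_erase_of_calibrated {C S : Finset V} {v : V} (hv : v ∈ S)
    {β μ : (∀ u, D u) → ℝ} (hcal : ∀ x, margOver (C \ S) β x = μ x) (x : ∀ u, D u) :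
    margOver (C.erase v \ S.erase v) (margOver {v} β) x = margOver {v} μ x := by
  have hdisj : Disjoint (C \ S) {v} := by simp [hv]
  rw [Finset.erase_sdiff_erase_of_mem hv,
    margOver_margOver_of_margOver_eq hdisj (funext hcal)]

end

theorem localMarg_calibration_path_general {V : Type*} [DecidableEq V] {D : V → Type*}
    [∀ u, Fintype (D u)]
    (n : ℕ)
    (C : Fin (n + 1) → Finset V) (S : Fin n → Finset V)
    (β : Fin (n + 1) → (∀ u, D u) → ℝ) (μ : Fin n → (∀ u, D u) → ℝ)
    (v : V)
    -- `v` lies in every sepset along the path (hence in every clique)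
    (hv : ∀ i : Fin n, v ∈ S i)
    -- calibration of every edge of the path
    (hcal₁ : ∀ i : Fin n, ∀ x, margOver (C i.castSucc \ S i) (β i.castSucc) x = μ i x)
    (hcal₂ : ∀ i : Fin n, ∀ x, margOver (C i.succ \ S i) (β i.succ) x = μ i x) :
    -- after local marginalization of `v`, every edge is still calibrated
    (∀ i : Fin n, ∀ x,
        margOver ((C i.castSucc).erase v \ (S i).erase v)
            (margOver {v} (β i.castSucc)) x = margOver {v} (μ i) x) ∧
    (∀ i : Fin n, ∀ x,
        margOver ((C i.succ).erase v \ (S i).erase v)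
            (margOver {v} (β i.succ)) x = margOver {v} (μ i) x) :=
  ⟨fun i => margOver_erase_sdiff_erase_of_calibrated (hv i) (hcal₁ i),
    fun i => margOver_erase_sdiff_erase_of_calibrated (hv i) (hcal₂ i)⟩

/-- local marginalization preserves calibration along a whole
path.  The path of cliques is `C 0 — C 1 — ⋯ — C n`, where the edge between
`C i` and `C (i+1)` has sepset `S i` with sepset belief `μ i`.  If `v` lies in
every sepset along the path and each edge is calibrated, then after
marginalizing `v` out of every clique and sepset on the path, every edge of the
path is still calibrated. -/
theorem localMarg_calibration_path {V : Type*} [DecidableEq V] {D : V → Type*}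
    [∀ u, Fintype (D u)]
    (n : ℕ)
    (C : Fin (n + 1) → Finset V) (S : Fin n → Finset V)
    (β : Fin (n + 1) → (∀ u, D u) → ℝ) (μ : Fin n → (∀ u, D u) → ℝ)
    (v : V)
    (hS : ∀ i : Fin n, S i ⊆ C i.castSucc ∩ C i.succ)
    -- `v` lies in every sepset along the path (hence in every clique)
    (hv : ∀ i : Fin n, v ∈ S i)
    -- calibration of every edge of the path
    (hcal₁ : ∀ i : Fin n, ∀ x, margOver (C i.castSucc \ S i) (β i.castSucc) x = μ i x)
    (hcal₂ : ∀ i : Fin n, ∀ x, margOver (C i.succ \ S i) (β i.succ) x = μ i x) :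
    -- after local marginalization of `v`, every edge is still calibrated
    (∀ i : Fin n, ∀ x,
        margOver ((C i.castSucc).erase v \ (S i).erase v)
            (margOver {v} (β i.castSucc)) x = margOver {v} (μ i) x) ∧
    (∀ i : Fin n, ∀ x,
        margOver ((C i.succ).erase v \ (S i).erase v)
            (margOver {v} (β i.succ)) x = margOver {v} (μ i) x) :=
  localMarg_calibration_path_general n C S β μ v hv hcal₁ hcal₂
end
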